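/- Let n ≥ 1 be an integer and let α be a real number with 0 < α < 2. Then the function σ ↦ J_{n,α}(σ) is differentiable at σ = 1, and J_{n,α}′(1) = −(α/2)·J_{n,α}(1). -/

import Mathlib

/-!
Write `|σ - e^{iβ}|^{-α} = K(σ, β)^{-α/2}` with `K(σ, β) = σ² - 2σ cos β + 1` and differentiate
under the integral sign. For `σ ≥ 1/2` and `|β| ≤ π` one has `K ≥ (2/π²) β²` and
`|∂_σ K| = 2|σ - cos β| ≤ 2√K`, while `cos β - cos nβ = O(β²)`; so the `σ`-derivative of the
integrand is `O(|β|^{1-α})`, which is integrable because `α < 2`. At `σ = 1` one has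
`∂_σ K = 2 - 2 cos β = K`, so there the derivative of `K^{-α/2}` is `-(α/2) K^{-α/2}`.
-/

/-- `|σ - e^{iβ}| = √(σ² - 2σ cos β + 1)`. -/
noncomputable def Kker (σ β : ℝ) : ℝ := Real.sqrt (σ^2 - 2*σ*Real.cos β + 1)

/-- `J_{n,α}(σ) = (1/α) ∫_{-π}^{π} (cos β - cos(nβ))/|σ - e^{iβ}|^α dβ`. -/
noncomputable def Jfun (n : ℕ) (α σ : ℝ) : ℝ :=
  (1/α) * ∫ β in (-Real.pi)..Real.pi, (Real.cos β - Real.cos (n*β)) / (Kker σ β) ^ α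

open Real MeasureTheory intervalIntegral Set
open scoped Interval

lemma intervalIntegrable_abs_rpow {r : ℝ} (hr : -1 < r) (a b : ℝ) :
    IntervalIntegrable (fun x : ℝ => |x| ^ r) volume a b := by
  refine intervalIntegrable_of_even (fun x => by rw [abs_neg]) (fun x hx => ?_)
  refine (intervalIntegrable_rpow' hr).congr_ae ?_
  filter_upwards [ae_restrict_mem measurableSet_uIoc] with y hy
  rw [uIoc_of_le hx.le] at hy
  rw [abs_of_pos hy.1]

lemma sq_mul_abs_rpow {β : ℝ} (hβ : β ≠ 0) (r : ℝ) : β ^ 2 * |β| ^ r = |β| ^ (2 + r) := by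
  rw [rpow_add (abs_pos.2 hβ), rpow_two, sq_abs]

lemma abs_cos_sub_cos_mul_le (c β : ℝ) : |cos β - cos (c * β)| ≤ (c ^ 2 + 1) / 2 * β ^ 2 := by
  have h1 : 1 - β ^ 2 / 2 ≤ cos β := one_sub_sq_div_two_le_cos
  have h2 : 1 - (c * β) ^ 2 / 2 ≤ cos (c * β) := one_sub_sq_div_two_le_cos
  rw [abs_le]
  constructor <;> nlinarith [cos_le_one β, cos_le_one (c * β)]

noncomputable def kernelSq (σ β : ℝ) : ℝ := σ ^ 2 - 2 * σ * cos β + 1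

lemma sq_sub_cos_le_kernelSq (σ β : ℝ) : (σ - cos β) ^ 2 ≤ kernelSq σ β := by
  have := sin_sq_add_cos_sq β
  unfold kernelSq
  nlinarith [sq_nonneg (sin β)]

lemma kernelSq_nonneg (σ β : ℝ) : 0 ≤ kernelSq σ β :=
  (sq_nonneg _).trans (sq_sub_cos_le_kernelSq σ β)

lemma mul_sq_le_kernelSq {σ β : ℝ} (hσ : 1 / 2 ≤ σ) (hβ : |β| ≤ π) :
    2 / π ^ 2 * β ^ 2 ≤ kernelSq σ β := by
  have h := cos_le_one_sub_mul_cos_sq hβ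
  have := mul_nonneg (sub_nonneg.2 hσ) (sub_nonneg.2 (cos_le_one β))
  unfold kernelSq
  nlinarith [sq_nonneg (σ - 1)]

lemma kernelSq_pos {σ β : ℝ} (hσ : 1 / 2 ≤ σ) (hβ0 : β ≠ 0) (hβ : |β| ≤ π) :
    0 < kernelSq σ β :=
  lt_of_lt_of_le (by positivity) (mul_sq_le_kernelSq hσ hβ)

lemma Kker_rpow (σ β α : ℝ) : Kker σ β ^ α = kernelSq σ β ^ (α / 2) := by
  change (kernelSq σ β).sqrt ^ α = _
  rw [sqrt_eq_rpow, ← rpow_mul (kernelSq_nonneg σ β)]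
  ring_nf

lemma hasDerivAt_kernelSq_rpow {σ β : ℝ} (s : ℝ) (h : 0 < kernelSq σ β) :
    HasDerivAt (fun σ => kernelSq σ β ^ s)
      ((2 * σ - 2 * cos β) * s * kernelSq σ β ^ (s - 1)) σ := by
  have hK : HasDerivAt (fun σ => kernelSq σ β) (2 * σ - 2 * cos β) σ := by
    unfold kernelSq
    refine (((hasDerivAt_pow 2 σ).sub
      (((hasDerivAt_id σ).const_mul 2).mul_const (cos β))).add_const 1).congr_deriv ?_
    simp
  exact hK.rpow_const (Or.inl h.ne')

lemma abs_sub_cos_mul_kernelSq_rpow_le {σ β : ℝ} (s : ℝ) (h : 0 < kernelSq σ β) :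
    |2 * σ - 2 * cos β| * kernelSq σ β ^ (s - 1) ≤ 2 * kernelSq σ β ^ (s - 1 / 2) := by
  have hsqrt : |σ - cos β| ≤ kernelSq σ β ^ (1 / 2 : ℝ) := by
    rw [← sqrt_eq_rpow, ← sqrt_sq_eq_abs]
    exact sqrt_le_sqrt (sq_sub_cos_le_kernelSq σ β)
  calc |2 * σ - 2 * cos β| * kernelSq σ β ^ (s - 1)
      = 2 * |σ - cos β| * kernelSq σ β ^ (s - 1) := by
        rw [← abs_two, ← abs_mul, abs_two]; ring_nf
    _ ≤ 2 * kernelSq σ β ^ (1 / 2 : ℝ) * kernelSq σ β ^ (s - 1) := by gcongr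
    _ = 2 * kernelSq σ β ^ (s - 1 / 2) := by
        rw [mul_assoc, ← rpow_add h]; ring_nf

lemma kernelSq_one_mul_rpow_sub_one {s : ℝ} (hs : s ≠ 0) (β : ℝ) :
    (2 * 1 - 2 * cos β) * s * kernelSq 1 β ^ (s - 1) = s * kernelSq 1 β ^ s := by
  have hK : kernelSq 1 β = 2 * 1 - 2 * cos β := by unfold kernelSq; ring
  have h := rpow_add_one' (kernelSq_nonneg 1 β) (y := s - 1) (by simpa using hs)
  rw [sub_add_cancel] at h
  rw [← hK, h]
  ring

lemma kernelSq_rpow_le {σ β t : ℝ} (hσ : 1 / 2 ≤ σ) (hβ0 : β ≠ 0) (hβ : |β| ≤ π)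
    (ht : t ≤ 0) :
    kernelSq σ β ^ t ≤ (2 / π ^ 2) ^ t * |β| ^ (2 * t) :=
  calc kernelSq σ β ^ t
      ≤ (2 / π ^ 2 * β ^ 2) ^ t :=
        rpow_le_rpow_of_nonpos (by positivity) (mul_sq_le_kernelSq hσ hβ) ht
    _ = (2 / π ^ 2) ^ t * |β| ^ (2 * t) := by
        rw [mul_rpow (by positivity) (sq_nonneg β), ← sq_abs β, ← rpow_two |β|,
          ← rpow_mul (abs_nonneg β)]

lemma abs_mul_kernelSq_rpow_le {c σ β t y : ℝ} (hy : |y| ≤ c * β ^ 2) (hσ : 1 / 2 ≤ σ)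
    (hβ0 : β ≠ 0) (hβ : |β| ≤ π) (ht : t ≤ 0) :
    |y| * kernelSq σ β ^ t ≤ c * (2 / π ^ 2) ^ t * |β| ^ (2 + 2 * t) := by
  have hc : 0 ≤ c := nonneg_of_mul_nonneg_left ((abs_nonneg y).trans hy) (by positivity)
  calc |y| * kernelSq σ β ^ t
      ≤ c * β ^ 2 * ((2 / π ^ 2) ^ t * |β| ^ (2 * t)) := by
        gcongr
        · exact rpow_nonneg (kernelSq_nonneg σ β) t
        · exact kernelSq_rpow_le hσ hβ0 hβ ht
    _ = c * (2 / π ^ 2) ^ t * |β| ^ (2 + 2 * t) := by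
        rw [← sq_mul_abs_rpow hβ0]; ring

lemma abs_mul_deriv_kernelSq_rpow_le {c σ β s y : ℝ} (hy : |y| ≤ c * β ^ 2) (hσ : 1 / 2 ≤ σ)
    (hβ0 : β ≠ 0) (hβ : |β| ≤ π) (hs : s ≤ 1 / 2) :
    |y * ((2 * σ - 2 * cos β) * s * kernelSq σ β ^ (s - 1))| ≤
      2 * |s| * c * (2 / π ^ 2) ^ (s - 1 / 2) * |β| ^ (2 + 2 * (s - 1 / 2)) := by
  have hK := kernelSq_pos hσ hβ0 hβ
  calc |y * ((2 * σ - 2 * cos β) * s * kernelSq σ β ^ (s - 1))|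
      = |s| * (|y| * (|2 * σ - 2 * cos β| * kernelSq σ β ^ (s - 1))) := by
        rw [abs_mul, abs_mul, abs_mul, abs_of_pos (rpow_pos_of_pos hK _)]; ring
    _ ≤ |s| * (|y| * (2 * kernelSq σ β ^ (s - 1 / 2))) := by
        gcongr |s| * (|y| * ?_); exact abs_sub_cos_mul_kernelSq_rpow_le s hK
    _ = 2 * |s| * (|y| * kernelSq σ β ^ (s - 1 / 2)) := by ring
    _ ≤ 2 * |s| * (c * (2 / π ^ 2) ^ (s - 1 / 2) * |β| ^ (2 + 2 * (s - 1 / 2))) := by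
        gcongr 2 * |s| * ?_; exact abs_mul_kernelSq_rpow_le hy hσ hβ0 hβ (by linarith)
    _ = _ := by ring

theorem hasDerivAt_integral_mul_kernelSq_rpow {g : ℝ → ℝ} {c s : ℝ} (hg : Measurable g)
    (hgc : ∀ β, |g β| ≤ c * β ^ 2) (hs : -1 < s) (hs0 : s < 0) :
    HasDerivAt (fun σ => ∫ β in -π..π, g β * kernelSq σ β ^ s)
      (s * ∫ β in -π..π, g β * kernelSq 1 β ^ s) 1 := by
  have hgood : ∀ᵐ β, β ∈ Ι (-π) π → β ≠ 0 ∧ |β| ≤ π := by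
    filter_upwards [volume.ae_ne 0] with β hβ0 hβ
    rw [uIoc_of_le (by linarith [pi_pos])] at hβ
    exact ⟨hβ0, abs_le.2 ⟨hβ.1.le, hβ.2⟩⟩
  have hball : ∀ σ ∈ Metric.ball (1 : ℝ) (1 / 2), 1 / 2 ≤ σ := fun σ hσ => by
    rw [Metric.mem_ball, Real.dist_eq, abs_lt] at hσ; linarith
  have hmeas : ∀ σ, Measurable fun β => kernelSq σ β ^ s := fun σ => by
    unfold kernelSq; fun_prop
  have hF_int : IntervalIntegrable (fun β => g β * kernelSq 1 β ^ s) volume (-π) π := by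
    refine ((intervalIntegrable_abs_rpow (r := 2 + 2 * s) (by linarith) _ _).const_mul
      (c * (2 / π ^ 2) ^ s)).mono_fun' (hg.mul (hmeas 1)).aestronglyMeasurable ?_
    filter_upwards [ae_restrict_of_ae hgood, ae_restrict_mem measurableSet_uIoc]
      with β hβ hmem
    obtain ⟨hβ0, hβπ⟩ := hβ hmem
    rw [norm_mul, norm_of_nonneg (rpow_nonneg (kernelSq_nonneg 1 β) s), norm_eq_abs]
    exact abs_mul_kernelSq_rpow_le (hgc β) one_half_lt_one.le hβ0 hβπ hs0.le
  obtain ⟨-, hderiv⟩ := hasDerivAt_integral_of_dominated_loc_of_deriv_le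
    (F := fun σ β => g β * kernelSq σ β ^ s)
    (F' := fun σ β => g β * ((2 * σ - 2 * cos β) * s * kernelSq σ β ^ (s - 1)))
    (bound := fun β => 2 * |s| * c * (2 / π ^ 2) ^ (s - 1 / 2) * |β| ^ (2 + 2 * (s - 1 / 2)))
    (Metric.ball_mem_nhds 1 one_half_pos)
    (.of_forall fun σ => (hg.mul (hmeas σ)).aestronglyMeasurable)
    hF_int
    (by unfold kernelSq; fun_prop)
    (by
      filter_upwards [hgood] with β hβ hmem σ hσ
      obtain ⟨hβ0, hβπ⟩ := hβ hmem
      exact abs_mul_deriv_kernelSq_rpow_le (hgc β) (hball σ hσ) hβ0 hβπ (by linarith))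
    ((intervalIntegrable_abs_rpow (by linarith) _ _).const_mul _)
    (by
      filter_upwards [hgood] with β hβ hmem σ hσ
      obtain ⟨hβ0, hβπ⟩ := hβ hmem
      exact (hasDerivAt_kernelSq_rpow s (kernelSq_pos (hball σ hσ) hβ0 hβπ)).const_mul (g β))
  refine hderiv.congr_deriv ?_
  rw [← intervalIntegral.integral_const_mul]
  refine integral_congr fun β _ => ?_
  simp only [kernelSq_one_mul_rpow_sub_one hs0.ne]
  ring

theorem stmt6_general (n : ℕ) (α : ℝ) (hα0 : 0 < α) (hα2 : α < 2) :
    HasDerivAt (Jfun n α) (-(α/2) * Jfun n α 1) 1 := by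
  have hJ : Jfun n α = fun σ =>
      (1 / α) * ∫ β in -π..π, (cos β - cos (n * β)) * kernelSq σ β ^ (-(α / 2)) := by
    funext σ
    simp only [Jfun, Kker_rpow, div_eq_mul_inv, ← rpow_neg (kernelSq_nonneg _ _)]
  have hderiv := hasDerivAt_integral_mul_kernelSq_rpow (by fun_prop)
    (abs_cos_sub_cos_mul_le n) (by linarith : -1 < -(α / 2)) (by linarith)
  rw [hJ]
  refine (hderiv.const_mul (1 / α)).congr_deriv ?_
  beta_reduce
  ring

theorem stmt6 (n : ℕ) (hn : 1 ≤ n) (α : ℝ) (hα0 : 0 < α) (hα2 : α < 2) :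
    HasDerivAt (Jfun n α) (-(α/2) * Jfun n α 1) 1 :=
  stmt6_general n α hα0 hα2
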